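/- Let T be the operator Tf(e,r) = (1/(r²√(2(e−φ_Q(r))))) ∂_r f acting on smooth functions on U = {(r,e): e−φ_Q(r) > 0}, and let g(r,e) = (r√(2(e−φ_Q(r))))³. Then −T²g/g = 3(ρ_Q(r) + φ_Q'(r)/r) / (r√(2(e−φ_Q(r))))⁴, where ρ_Q(r) = (8π√2/3)∫_{-∞}^0 |F'(e)|(e−φ_Q(r))₊^{3/2} de. -/

import Mathlib

open MeasureTheory Real Filter Set

noncomputable section

/-- The operator `T f(r,e) = (1/(r²√(2(e−φ_Q(r))))) ∂_r f`. -/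
def Tvec (φQ : ℝ → ℝ) (u : ℝ × ℝ → ℝ) (q : ℝ × ℝ) : ℝ :=
  (deriv (fun r => u (r, q.2)) q.1) / (q.1 ^ 2 * Real.sqrt (2 * (q.2 - φQ q.1)))

/-- The weight function `g(r,e) = (r√(2(e−φ_Q(r))))³`. -/
def gfun (φQ : ℝ → ℝ) (q : ℝ × ℝ) : ℝ :=
  (q.1 * Real.sqrt (2 * (q.2 - φQ q.1))) ^ 3

open Topology

/-! With `S = √(2(e − φ))` we have `∂ᵣ S = −φ'/S`, so in `T g = 3 (r S)² ∂ᵣ(r S) / (r² S)` every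
square root cancels: `T g = 3 (S² − r φ') = 6 (e − φ) − 3 r φ'`, a function of `r` alone up to
the constant `e`. Hence `T² g = −3 (r φ'' + 3 φ') / (r² S)`, and the Poisson equation in the
form `r φ'' + 2 φ' = r ρ` gives `r φ'' + 3 φ' = r (ρ + φ'/r)`; dividing by `g = (r S)³`
yields the identity. -/

lemma Tvec_apply (φ : ℝ → ℝ) (u : ℝ × ℝ → ℝ) (r e : ℝ) :
    Tvec φ u (r, e) = deriv (fun x => u (x, e)) r / (r ^ 2 * √(2 * (e - φ r))) :=
  rfl

lemma Tvec_gfun {φ : ℝ → ℝ} {r e : ℝ} (hφ : DifferentiableAt ℝ φ r) (hr : r ≠ 0)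
    (he : φ r < e) :
    Tvec φ (gfun φ) (r, e) = 6 * (e - φ r) - 3 * r * deriv φ r := by
  change deriv (fun x => (x * √(2 * (e - φ x))) ^ 3) r / (r ^ 2 * √(2 * (e - φ r))) = _
  have hpos : 0 < 2 * (e - φ r) := by linarith
  have hS_pos : 0 < √(2 * (e - φ r)) := sqrt_pos.mpr hpos
  have hS_sq : √(2 * (e - φ r)) ^ 2 = 2 * (e - φ r) := sq_sqrt hpos.le
  have hS_deriv : HasDerivAt (fun x => √(2 * (e - φ x)))
      (1 / (2 * √(2 * (e - φ r))) * (2 * (0 - deriv φ r))) r :=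
    (hasDerivAt_sqrt hpos.ne').comp r (((hasDerivAt_const r e).sub hφ.hasDerivAt).const_mul 2)
  have hrS_deriv : HasDerivAt (fun x => x * √(2 * (e - φ x)))
      (1 * √(2 * (e - φ r)) + r * (1 / (2 * √(2 * (e - φ r))) * (2 * (0 - deriv φ r)))) r :=
    (hasDerivAt_id r).mul hS_deriv
  rw [(hrS_deriv.fun_pow 3).deriv]
  push_cast
  field_simp
  linear_combination 3 * hS_sq

lemma Tvec_gfun_eventuallyEq {φ : ℝ → ℝ} {r e : ℝ} (hφ : Differentiable ℝ φ) (hr : r ≠ 0)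
    (he : φ r < e) :
    (fun x => Tvec φ (gfun φ) (x, e)) =ᶠ[𝓝 r] fun x => 6 * (e - φ x) - 3 * x * deriv φ x := by
  have hU : ∀ᶠ x in 𝓝 r, x ≠ 0 ∧ φ x < e :=
    (isOpen_ne.inter (isOpen_lt hφ.continuous continuous_const)).mem_nhds ⟨hr, he⟩
  filter_upwards [hU] with x ⟨hx, hxe⟩
  exact Tvec_gfun (hφ x) hx hxe

lemma Tvec_Tvec_gfun {φ : ℝ → ℝ} {r e : ℝ} (hφ : Differentiable ℝ φ)
    (hφ' : DifferentiableAt ℝ (deriv φ) r) (hr : r ≠ 0) (he : φ r < e) :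
    Tvec φ (Tvec φ (gfun φ)) (r, e)
      = -3 * (r * deriv (deriv φ) r + 3 * deriv φ r) / (r ^ 2 * √(2 * (e - φ r))) := by
  have hTg_deriv : HasDerivAt (fun x => 6 * (e - φ x) - 3 * x * deriv φ x)
      (6 * (0 - deriv φ r) - (3 * 1 * deriv φ r + 3 * r * deriv (deriv φ) r)) r :=
    (((hasDerivAt_const r e).sub (hφ r).hasDerivAt).const_mul 6).sub
      (((hasDerivAt_id' r).const_mul 3).mul hφ'.hasDerivAt)
  rw [Tvec_apply, (Tvec_gfun_eventuallyEq hφ hr he).deriv_eq, hTg_deriv.deriv]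
  ring

theorem convexity_identity_general (φQ ρQ : ℝ → ℝ)
    (hφQ : ContDiff ℝ 2 φQ)
    (hPoisson : ∀ r : ℝ, 0 < r →
      deriv (deriv φQ) r + (2 / r) * deriv φQ r = ρQ r) :
    ∀ r e : ℝ, 0 < r → φQ r < e →
      -(Tvec φQ (Tvec φQ (gfun φQ)) (r, e)) / gfun φQ (r, e)
        = 3 * (ρQ r + deriv φQ r / r) /
            (r * Real.sqrt (2 * (e - φQ r))) ^ 4 := by
  intro r e hr he
  have hφ : Differentiable ℝ φQ := hφQ.differentiable (by norm_num)
  have hφ' : Differentiable ℝ (deriv φQ) :=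
    (contDiff_succ_iff_deriv.mp (hφQ : ContDiff ℝ (1 + 1) φQ)).2.2.differentiable one_ne_zero
  have hS_pos : 0 < √(2 * (e - φQ r)) := sqrt_pos.mpr (by linarith)
  rw [Tvec_Tvec_gfun hφ (hφ' r) hr.ne' he, ← hPoisson r hr]
  unfold gfun
  field_simp
  ring

theorem convexity_identity (φQ ρQ F' : ℝ → ℝ)
    (hφQ : ContDiff ℝ 2 φQ)
    (hPoisson : ∀ r : ℝ, 0 < r →
      deriv (deriv φQ) r + (2 / r) * deriv φQ r = ρQ r)
    (hρQ : ∀ r : ℝ,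
      ρQ r = (8 * π * Real.sqrt 2 / 3) *
        ∫ e in Iio (0 : ℝ), |F' e| * (max (e - φQ r) 0) ^ ((3 : ℝ) / 2)) :
    ∀ r e : ℝ, 0 < r → φQ r < e →
      -(Tvec φQ (Tvec φQ (gfun φQ)) (r, e)) / gfun φQ (r, e)
        = 3 * (ρQ r + deriv φQ r / r) /
            (r * Real.sqrt (2 * (e - φQ r))) ^ 4 :=
  convexity_identity_general φQ ρQ hφQ hPoisson
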